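/- Comparison estimate against a time-periodic profile (key estimate of Theorem 1.1): let j ∈ {1,2}, ε > 0, T > 0, γ₉ ≥ 0, K ≥ 0. Let A : [0,T)×ℝ×ℝ² → ℝ and C : [0,T)×ℝ×ℝ² → ℝ² be C¹, 1-periodic in their second argument θ, with A ≥ 0 on [0,T)×ℝ×closure(Ω), and let g : ℝ² → ℝ be continuous. Suppose S : [0,T)×ℝ×ℝ² → ℝ is C¹ in (t,θ) and C² in x on an open set containing [0,T)×ℝ×closure(Ω), is 1-periodic in θ, satisfies ∂S/∂θ − (1/ε^{j−1})∇·(A(t,θ,·)∇S(t,θ,·)) = (1/ε^{j−1})∇·C(t,θ,·) in Ω and ∂S/∂n + S = g on ∂Ω for all (t,θ), and satisfies (∫_Ω |∂S/∂t(t,θ,x)|² dx)^{1/2} ≤ γ₉ and (∫_Ω S(t,θ,x)² dx)^{1/2} ≤ K for all (t,θ). If z is a classical solution of ∂z/∂t − (1/εʲ)∇·(A(t,t/ε,·)∇z) = (1/εʲ)∇·C(t,t/ε,·) in (0,T)×Ω with z(0,·) = z₀ on Ω and ∂z/∂n + z = g on (0,T)×∂Ω, then for every t ∈ [0,T): (∫_Ω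 z(t,x)² dx)^{1/2} ≤ (∫_Ω (z₀(x) − S(0,0,x))² dx)^{1/2} + γ₉ T + K. -/

import Mathlib

open MeasureTheory Set Real
open scoped RealInnerProductSpace

noncomputable section

abbrev E2 : Type := EuclideanSpace ℝ (Fin 2)

/-- Divergence of a vector field on the plane. -/
def vdiv (F : E2 → E2) (x : E2) : ℝ := ∑ i, fderiv ℝ F x (EuclideanSpace.single i 1) i

/-- A nonempty bounded open set in the plane with `C¹` boundary described by a defining
function `Φ`. -/
structure C1Domain where
  Ω : Set E2
  Φ : E2 → ℝ
  nonempty : Ω.Nonempty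
  bounded : Bornology.IsBounded Ω
  isOpen : IsOpen Ω
  smoothΦ : ContDiff ℝ 1 Φ
  eq_dom : Ω = {x | Φ x < 0}
  eq_bd : frontier Ω = {x | Φ x = 0}
  grad_ne : ∀ x ∈ frontier Ω, gradient Φ x ≠ 0

/-- Outward unit normal. -/
def nml (D : C1Domain) (x : E2) : E2 := ‖gradient D.Φ x‖⁻¹ • gradient D.Φ x

/-- The divergence theorem holds on the domain. -/
def DivergenceThm (D : C1Domain) : Prop :=
  ∀ F : E2 → E2, (∃ U : Set E2, IsOpen U ∧ closure D.Ω ⊆ U ∧ ContDiffOn ℝ 1 F U) →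
    (∫ x in D.Ω, vdiv F x) = ∫ x in frontier D.Ω, ⟪F x, nml D x⟫ ∂μH[1]

/-- `z` is `C¹` in `t` and `C²` in `x` on an open set containing `[0,T) × closure Ω`. -/
def ClassicalReg (T : ℝ) (D : C1Domain) (z : ℝ → E2 → ℝ) : Prop :=
  ∃ U : Set (ℝ × E2), IsOpen U ∧ (Ico 0 T ×ˢ closure D.Ω) ⊆ U ∧
    ContDiffOn ℝ 1 (fun p : ℝ × E2 => z p.1 p.2) U ∧
    ∀ t : ℝ, ContDiffOn ℝ 2 (fun x => z t x) {x | (t, x) ∈ U}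

/-!
Put `w(t) = z(t) - 𝒮(t, t/ε)`. By the chain rule `∂ₜ[𝒮(t, t/ε)] = ∂ₜ𝒮 + ε⁻¹ ∂_θ𝒮`, and because
`ε⁻¹ · ε^{-(j-1)} = ε^{-j}`, the cell problem solved by `𝒮` cancels the oscillating source `∇ · C`:
`w` solves `∂ₜw = ε^{-j} ∇ · (A ∇w) - ∂ₜ𝒮(t, t/ε)` with the homogeneous Robin condition
`∂ₙw + w = 0`. Testing with `w` and applying the divergence theorem to `w A ∇w` gives
`d/dt ‖w‖² = -2ε^{-j} (∫_Ω A |∇w|² + ∫_{∂Ω} A w²) - 2 ∫_Ω w ∂ₜ𝒮 ≤ 2 γ₉ ‖w‖`, hence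
`‖w(t)‖ ≤ ‖w(0)‖ + γ₉ t`, and `‖z(t)‖ ≤ ‖w(t)‖ + ‖𝒮(t, t/ε)‖ ≤ ‖w(0)‖ + γ₉ T + K`.
-/

open scoped Topology

namespace MeasureTheory.MemLp

variable {α : Type*} [MeasurableSpace α] {μ : Measure α} {f g : α → ℝ}

theorem inner_toLp_toLp (hf : MemLp f 2 μ) (hg : MemLp g 2 μ) :
    ⟪hf.toLp f, hg.toLp g⟫ = ∫ x, f x * g x ∂μ := by
  rw [L2.inner_def]
  refine integral_congr_ae ?_
  filter_upwards [hf.coeFn_toLp, hg.coeFn_toLp] with x hfx hgx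
  simp [hfx, hgx, mul_comm]

theorem norm_toLp_eq_sqrt_integral_sq (hf : MemLp f 2 μ) :
    ‖hf.toLp f‖ = √(∫ x, f x ^ 2 ∂μ) := by
  rw [← Real.sqrt_sq (norm_nonneg _), ← real_inner_self_eq_norm_sq, inner_toLp_toLp]
  simp only [sq]

theorem integral_mul_le_sqrt_mul_sqrt (hf : MemLp f 2 μ) (hg : MemLp g 2 μ) :
    ∫ x, f x * g x ∂μ ≤ √(∫ x, f x ^ 2 ∂μ) * √(∫ x, g x ^ 2 ∂μ) := by
  rw [← inner_toLp_toLp hf hg, ← hf.norm_toLp_eq_sqrt_integral_sq,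
    ← hg.norm_toLp_eq_sqrt_integral_sq]
  exact real_inner_le_norm _ _

theorem sqrt_integral_add_sq_le (hf : MemLp f 2 μ) (hg : MemLp g 2 μ) :
    √(∫ x, (f x + g x) ^ 2 ∂μ) ≤ √(∫ x, f x ^ 2 ∂μ) + √(∫ x, g x ^ 2 ∂μ) := by
  rw [← hf.norm_toLp_eq_sqrt_integral_sq, ← hg.norm_toLp_eq_sqrt_integral_sq]
  calc √(∫ x, (f x + g x) ^ 2 ∂μ) = ‖(hf.add hg).toLp (f + g)‖ :=
        ((hf.add hg).norm_toLp_eq_sqrt_integral_sq).symm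
    _ ≤ ‖hf.toLp f‖ + ‖hg.toLp g‖ := by rw [toLp_add]; exact norm_add_le _ _

end MeasureTheory.MemLp

namespace Bornology.IsBounded

variable {X : Type*} [MetricSpace X] [ProperSpace X] [MeasurableSpace X] [BorelSpace X]
  {μ : Measure X} [IsFiniteMeasureOnCompacts μ] {s : Set X} {f : X → ℝ}

theorem integrableOn_of_continuousOn_closure (hs : IsBounded s)
    (hf : ContinuousOn f (closure s)) : IntegrableOn f s μ :=
  (hf.integrableOn_compact hs.isCompact_closure).mono_set subset_closure

theorem memLp_two_of_continuousOn_closure (hs : IsBounded s)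
    (hf : ContinuousOn f (closure s)) : MemLp f 2 (μ.restrict s) :=
  (memLp_two_iff_integrable_sq
    (hs.integrableOn_of_continuousOn_closure hf).aestronglyMeasurable).mpr
      (hs.integrableOn_of_continuousOn_closure (hf.pow 2))

end Bornology.IsBounded

open Function in
theorem hasDerivAt_setIntegral_of_continuousOn {X : Type*} [TopologicalSpace X] [T2Space X]
    [MeasurableSpace X] [OpensMeasurableSpace X] {μ : Measure X} [IsFiniteMeasureOnCompacts μ]
    {K s : Set X} (hK : IsCompact K) (hsK : s ⊆ K) {U : Set (ℝ × X)} (hU : IsOpen U)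
    {f f' : ℝ → X → ℝ} (hf : ContinuousOn (uncurry f) U) (hf' : ContinuousOn (uncurry f') U)
    (hderiv : ∀ p ∈ U, HasDerivAt (fun t => f t p.2) (f' p.1 p.2) p.1)
    {t₀ : ℝ} (hKU : {t₀} ×ˢ K ⊆ U) :
    HasDerivAt (fun t => ∫ x in s, f t x ∂μ) (∫ x in s, f' t₀ x ∂μ) t₀ := by
  obtain ⟨V, W, hV, -, htV, hKW, hVW⟩ := generalized_tube_lemma isCompact_singleton hK hU hKU
  obtain ⟨δ, hδ, hballV⟩ := Metric.isOpen_iff.mp hV t₀ (htV rfl)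
  have hQU : Metric.closedBall t₀ (δ / 2) ×ˢ K ⊆ U := fun p hp =>
    hVW ⟨hballV (Metric.closedBall_subset_ball (by linarith) hp.1), hKW hp.2⟩
  have hslice : ∀ g : ℝ → X → ℝ, ContinuousOn (uncurry g) U →
      ∀ t ∈ Metric.closedBall t₀ (δ / 2), IntegrableOn (g t) s μ := fun g hg t ht =>
    ((hg.comp (Continuous.prodMk_right t).continuousOn fun x hx => hQU ⟨ht, hx⟩)
      |>.integrableOn_compact hK).mono_set hsK
  have ht₀ : t₀ ∈ Metric.closedBall t₀ (δ / 2) := Metric.mem_closedBall_self (by linarith)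
  obtain ⟨M, hM⟩ := ((isCompact_closedBall t₀ (δ / 2)).prod hK).exists_bound_of_continuousOn
    (hf'.mono hQU)
  have : IsFiniteMeasure (μ.restrict s) :=
    isFiniteMeasure_restrict.mpr (measure_lt_top_of_subset hsK hK.measure_ne_top).ne
  refine (hasDerivAt_integral_of_dominated_loc_of_deriv_le (bound := fun _ => M)
    (Metric.closedBall_mem_nhds t₀ (half_pos hδ))
    (Filter.eventually_of_mem (Metric.closedBall_mem_nhds t₀ (half_pos hδ))
      fun t ht => (hslice f hf t ht).aestronglyMeasurable)
    (hslice f hf t₀ ht₀) (hslice f' hf' t₀ ht₀).aestronglyMeasurable ?_ (integrable_const M)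
    ?_).2
  all_goals
    refine ae_restrict_of_ae_restrict_of_subset hsK
      (ae_restrict_of_forall_mem hK.measurableSet fun x hx t ht => ?_)
  · exact hM (t, x) ⟨ht, hx⟩
  · exact hderiv (t, x) (hQU ⟨ht, hx⟩)

theorem sqrt_le_sqrt_add_mul_of_deriv_le {y y' : ℝ → ℝ} {b γ : ℝ} (hb : 0 ≤ b) (hγ : 0 ≤ γ)
    (hy : ∀ t ∈ Ioo 0 b, 0 ≤ y t) (hcont : ContinuousOn y (Icc 0 b))
    (hderiv : ∀ t ∈ Ioo 0 b, HasDerivAt y (y' t) t)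
    (hle : ∀ t ∈ Ioo 0 b, y' t ≤ 2 * γ * √(y t)) :
    √(y b) ≤ √(y 0) + γ * b := by
  -- `√y` need not be differentiable where `y = 0`, so we work with `√(y + δ)` and let `δ → 0`.
  have shifted : ∀ δ > 0, √(y b) ≤ √(y 0 + δ) + γ * b := by
    intro δ hδ
    have hanti : AntitoneOn (fun s => √(y s + δ) - γ * s) (Icc 0 b) := by
      refine antitoneOn_of_hasDerivWithinAt_nonpos (convex_Icc 0 b)
        (((hcont.add continuousOn_const).sqrt).sub (continuousOn_const.mul continuousOn_id))
        (f' := fun s => y' s / (2 * √(y s + δ)) - γ) (fun s hs => ?_) (fun s hs => ?_)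
      all_goals rw [interior_Icc] at hs
      · have hpos : y s + δ ≠ 0 := by linarith [hy s hs]
        exact ((((hderiv s hs).add_const δ).sqrt hpos).sub
          ((hasDerivAt_id s).const_mul γ) |>.hasDerivWithinAt).congr_deriv (by simp)
      · have hpos : 0 < √(y s + δ) := Real.sqrt_pos.mpr (by linarith [hy s hs])
        have hmono : √(y s) ≤ √(y s + δ) := Real.sqrt_le_sqrt (by linarith)
        rw [sub_nonpos, div_le_iff₀ (by positivity)]
        nlinarith [hle s hs]
    have := hanti (left_mem_Icc.mpr hb) (right_mem_Icc.mpr hb) hb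
    simp only [mul_zero, sub_zero] at this
    linarith [Real.sqrt_le_sqrt (show y b ≤ y b + δ by linarith)]
  have hlim : Filter.Tendsto (fun δ => √(y 0 + δ) + γ * b) (𝓝[>] 0) (𝓝 (√(y 0) + γ * b)) := by
    refine tendsto_nhdsWithin_of_tendsto_nhds ?_
    have hcont : Continuous (fun δ => √(y 0 + δ) + γ * b) := by fun_prop
    simpa using hcont.tendsto 0
  exact ge_of_tendsto hlim (eventually_nhdsWithin_of_forall shifted)

section Calculus

variable {Y : Type*} [NormedAddCommGroup Y] [NormedSpace ℝ Y]

theorem DifferentiableAt.hasDerivAt_comp_prodMk_left {F : ℝ × Y → ℝ} {t : ℝ} {y : Y}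
    (h : DifferentiableAt ℝ F (t, y)) :
    HasDerivAt (fun s => F (s, y)) (fderiv ℝ F (t, y) (1, 0)) t :=
  h.hasFDerivAt.comp_hasDerivAt t ((hasDerivAt_id t).prodMk (hasDerivAt_const t y))

theorem hasDerivAt_twoScale {S : ℝ → ℝ → Y → ℝ} {ε t : ℝ} {y : Y}
    (h : DifferentiableAt ℝ (fun p : ℝ × ℝ × Y => S p.1 p.2.1 p.2.2) (t, t / ε, y)) :
    HasDerivAt (fun s => S s (s / ε) y)
      (deriv (fun s => S s (t / ε) y) t + deriv (fun θ => S t θ y) (t / ε) / ε) t := by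
  have hL := h.hasFDerivAt
  have hpath := hL.comp_hasDerivAt t
    ((hasDerivAt_id t).prodMk (((hasDerivAt_id t).div_const ε).prodMk (hasDerivAt_const t y)))
  have ht := hL.comp_hasDerivAt t
    ((hasDerivAt_id t).prodMk ((hasDerivAt_const t (t / ε)).prodMk (hasDerivAt_const t y)))
  have hθ := hL.comp_hasDerivAt (t / ε)
    ((hasDerivAt_const (t / ε) t).prodMk ((hasDerivAt_id (t / ε)).prodMk
      (hasDerivAt_const (t / ε) y)))
  simp only [Function.comp_def, id] at hpath ht hθ
  rw [ht.deriv, hθ.deriv]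
  refine hpath.congr_deriv ?_
  have hsplit : ((1 : ℝ), 1 / ε, (0 : Y)) = (1, 0, 0) + ε⁻¹ • (0, 1, 0) := by simp
  rw [hsplit, map_add, map_smul, smul_eq_mul]
  ring

end Calculus

section Gradient

variable {F : Type*} [NormedAddCommGroup F] [InnerProductSpace ℝ F] [CompleteSpace F]
  {f g : F → ℝ} {x : F}

theorem gradient_fun_sub (hf : DifferentiableAt ℝ f x) (hg : DifferentiableAt ℝ g x) :
    gradient (fun y => f y - g y) x = gradient f x - gradient g x := by
  simp only [gradient, fderiv_fun_sub hf hg, map_sub]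

theorem ContDiffAt.gradient {m n : WithTop ℕ∞} (hf : ContDiffAt ℝ n f x) (hmn : m + 1 ≤ n) :
    ContDiffAt ℝ m (gradient f) x :=
  (InnerProductSpace.toDual ℝ F).symm.contDiff.contDiffAt.comp x (hf.fderiv_right hmn)

end Gradient

theorem Filter.EventuallyEq.vdiv_eq {F G : E2 → E2} {x : E2} (h : F =ᶠ[𝓝 x] G) :
    vdiv F x = vdiv G x := by
  simp only [vdiv, h.fderiv_eq]

theorem vdiv_fun_sub {F G : E2 → E2} {x : E2} (hF : DifferentiableAt ℝ F x)
    (hG : DifferentiableAt ℝ G x) :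
    vdiv (fun y => F y - G y) x = vdiv F x - vdiv G x := by
  simp [vdiv, fderiv_fun_sub hF hG, Finset.sum_sub_distrib]

theorem vdiv_fun_smul {f : E2 → ℝ} {F : E2 → E2} {x : E2} (hf : DifferentiableAt ℝ f x)
    (hF : DifferentiableAt ℝ F x) :
    vdiv (fun y => f y • F y) x = ⟪gradient f x, F x⟫ + f x * vdiv F x := by
  have hgrad : ∀ i, gradient f x i = fderiv ℝ f x (EuclideanSpace.single i 1) := fun i => by
    rw [← inner_gradient_left, EuclideanSpace.inner_single_right]; simp
  rw [PiLp.inner_apply]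
  simp only [vdiv, fderiv_fun_smul hf hF, add_apply,
    smul_apply, ContinuousLinearMap.smulRight_apply, PiLp.add_apply,
    PiLp.smul_apply, smul_eq_mul, Fin.sum_univ_two, hgrad, RCLike.inner_apply, conj_trivial]
  ring

theorem ContDiffAt.continuousAt_vdiv {F : E2 → E2} {x : E2} (hF : ContDiffAt ℝ 1 F x) :
    ContinuousAt (vdiv F) x := by
  have h := (hF.fderiv_right (m := 0) le_rfl).continuousAt
  unfold vdiv
  fun_prop

theorem vdiv_smul_gradient_fun_sub {a u v : E2 → ℝ} {x : E2} (ha : ContDiffAt ℝ 1 a x)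
    (hu : ContDiffAt ℝ 2 u x) (hv : ContDiffAt ℝ 2 v x) :
    vdiv (fun y => a y • gradient (fun y => u y - v y) y) x
      = vdiv (fun y => a y • gradient u y) x - vdiv (fun y => a y • gradient v y) x := by
  have hev : (fun y => a y • gradient (fun y => u y - v y) y)
      =ᶠ[𝓝 x] fun y => a y • gradient u y - a y • gradient v y := by
    filter_upwards [hu.eventually (by simp), hv.eventually (by simp)] with y huy hvy
    rw [gradient_fun_sub (huy.differentiableAt (by simp)) (hvy.differentiableAt (by simp)),
      smul_sub]
  rw [hev.vdiv_eq]
  exact vdiv_fun_sub ((ha.smul (hu.gradient le_rfl)).differentiableAt one_ne_zero)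
    ((ha.smul (hv.gradient le_rfl)).differentiableAt one_ne_zero)

theorem setIntegral_mul_vdiv_smul_gradient_nonpos (D : C1Domain) (hdiv : DivergenceThm D)
    {w a : E2 → ℝ} (hw : ∀ x ∈ closure D.Ω, ContDiffAt ℝ 2 w x)
    (ha : ∀ x ∈ closure D.Ω, ContDiffAt ℝ 1 a x) (ha_nonneg : ∀ x ∈ closure D.Ω, 0 ≤ a x)
    (hbc : ∀ x ∈ frontier D.Ω, ⟪gradient w x, nml D x⟫ + w x = 0) :
    ∫ x in D.Ω, w x * vdiv (fun y => a y • gradient w y) x ≤ 0 := by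
  set G : E2 → E2 := fun y => a y • gradient w y
  set F : E2 → E2 := fun y => w y • G y
  have hG : ∀ x ∈ closure D.Ω, ContDiffAt ℝ 1 G x := fun x hx =>
    (ha x hx).smul ((hw x hx).gradient le_rfl)
  have hF : ∀ x ∈ closure D.Ω, ContDiffAt ℝ 1 F x := fun x hx =>
    ((hw x hx).of_le one_le_two).smul (hG x hx)
  have hvdivF : ∀ x ∈ closure D.Ω, vdiv F x = a x * ‖gradient w x‖ ^ 2 + w x * vdiv G x :=
    fun x hx => by
      rw [vdiv_fun_smul ((hw x hx).differentiableAt (by simp))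
        ((hG x hx).differentiableAt one_ne_zero), real_inner_smul_right, real_inner_self_eq_norm_sq]
  have hFreg : ∃ U : Set E2, IsOpen U ∧ closure D.Ω ⊆ U ∧ ContDiffOn ℝ 1 F U :=
    ⟨{x | ContDiffAt ℝ 1 F x},
      isOpen_iff_mem_nhds.mpr fun x (hx : ContDiffAt ℝ 1 F x) => hx.eventually (by simp),
      hF, fun x (hx : ContDiffAt ℝ 1 F x) => hx.contDiffWithinAt⟩
  have hcont : ContinuousOn (fun x => w x * vdiv G x) (closure D.Ω) :=
    continuousOn_of_forall_continuousAt fun x hx =>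
      (hw x hx).continuousAt.mul (hG x hx).continuousAt_vdiv
  have hcontF : ContinuousOn (vdiv F) (closure D.Ω) :=
    continuousOn_of_forall_continuousAt fun x hx => (hF x hx).continuousAt_vdiv
  calc ∫ x in D.Ω, w x * vdiv G x
      ≤ ∫ x in D.Ω, vdiv F x := by
        refine setIntegral_mono_on (D.bounded.integrableOn_of_continuousOn_closure hcont)
          (D.bounded.integrableOn_of_continuousOn_closure hcontF) D.isOpen.measurableSet
          fun x hx => ?_
        have hax := ha_nonneg x (subset_closure hx)
        rw [hvdivF x (subset_closure hx)]
        nlinarith [sq_nonneg ‖gradient w x‖]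
    _ = ∫ x in frontier D.Ω, ⟪F x, nml D x⟫ ∂μH[1] := hdiv F hFreg
    _ ≤ 0 := by
        refine setIntegral_nonpos isClosed_frontier.measurableSet fun x hx => ?_
        have hflux : ⟪F x, nml D x⟫ = -(a x * w x ^ 2) := by
          simp only [F, G, real_inner_smul_left, eq_neg_of_add_eq_zero_left (hbc x hx)]
          ring
        rw [hflux, neg_nonpos]
        exact mul_nonneg (ha_nonneg x (frontier_subset_closure hx)) (sq_nonneg _)

theorem continuousOn_mul_vdiv_smul_gradient {s : Set E2} {u a : E2 → ℝ}
    (hu : ∀ x ∈ s, ContDiffAt ℝ 2 u x) (ha : ∀ x ∈ s, ContDiffAt ℝ 1 a x) :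
    ContinuousOn (fun x => u x * vdiv (fun y => a y • gradient u y) x) s :=
  continuousOn_of_forall_continuousAt fun x hx =>
    (hu x hx).continuousAt.mul ((ha x hx).smul ((hu x hx).gradient le_rfl)).continuousAt_vdiv

theorem setIntegral_mul_robin_le (D : C1Domain) (hdiv : DivergenceThm D) {κ γ : ℝ}
    (hκ : 0 ≤ κ) {u a f : E2 → ℝ} (hu : ∀ x ∈ closure D.Ω, ContDiffAt ℝ 2 u x)
    (ha : ∀ x ∈ closure D.Ω, ContDiffAt ℝ 1 a x ∧ 0 ≤ a x)
    (hf : ContinuousOn f (closure D.Ω)) (hfL2 : √(∫ x in D.Ω, f x ^ 2) ≤ γ)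
    (hbc : ∀ x ∈ frontier D.Ω, ⟪gradient u x, nml D x⟫ + u x = 0) :
    ∫ x in D.Ω, u x * (κ * vdiv (fun y => a y • gradient u y) x - f x)
      ≤ γ * √(∫ x in D.Ω, u x ^ 2) := by
  have hucont : ContinuousOn u (closure D.Ω) :=
    continuousOn_of_forall_continuousAt fun x hx => (hu x hx).continuousAt
  have hdiss : ∫ x in D.Ω, u x * vdiv (fun y => a y • gradient u y) x ≤ 0 :=
    setIntegral_mul_vdiv_smul_gradient_nonpos D hdiv hu (fun x hx => (ha x hx).1)
      (fun x hx => (ha x hx).2) hbc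
  have hcs : -∫ x in D.Ω, u x * f x ≤ γ * √(∫ x in D.Ω, u x ^ 2) := calc
    -∫ x in D.Ω, u x * f x = ∫ x in D.Ω, -u x * f x := by simp only [neg_mul, integral_neg]
    _ ≤ √(∫ x in D.Ω, (-u x) ^ 2) * √(∫ x in D.Ω, f x ^ 2) :=
      (D.bounded.memLp_two_of_continuousOn_closure hucont).neg.integral_mul_le_sqrt_mul_sqrt
        (D.bounded.memLp_two_of_continuousOn_closure hf)
    _ ≤ γ * √(∫ x in D.Ω, u x ^ 2) := by
      simp only [neg_sq]
      rw [mul_comm]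
      exact mul_le_mul_of_nonneg_right hfL2 (Real.sqrt_nonneg _)
  have hsplit : ∫ x in D.Ω, u x * (κ * vdiv (fun y => a y • gradient u y) x - f x)
      = κ * (∫ x in D.Ω, u x * vdiv (fun y => a y • gradient u y) x)
        - ∫ x in D.Ω, u x * f x := by
    simp only [mul_sub, mul_left_comm (u _) κ]
    rw [integral_sub ((D.bounded.integrableOn_of_continuousOn_closure
        (continuousOn_mul_vdiv_smul_gradient hu fun x hx => (ha x hx).1)).const_mul κ)
      (D.bounded.integrableOn_of_continuousOn_closure (hucont.fun_mul hf)), integral_const_mul]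
  rw [hsplit]
  linarith [mul_nonpos_of_nonneg_of_nonpos hκ hdiss]

def ProfileReg (T : ℝ) (D : C1Domain) (S : ℝ → ℝ → E2 → ℝ) : Prop :=
  ∃ U : Set (ℝ × ℝ × E2), IsOpen U ∧ (Ico 0 T ×ˢ (univ : Set ℝ) ×ˢ closure D.Ω) ⊆ U ∧
    ContDiffOn ℝ 1 (fun p : ℝ × ℝ × E2 => S p.1 p.2.1 p.2.2) U ∧
    ∀ t θ : ℝ, ContDiffOn ℝ 2 (fun x => S t θ x) {x | (t, θ, x) ∈ U}

section Regularity

variable {T : ℝ} {D : C1Domain} {t : ℝ} {x : E2}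

namespace ClassicalReg

variable {z : ℝ → E2 → ℝ}

theorem differentiableAt (hz : ClassicalReg T D z) (ht : t ∈ Ico 0 T) (hx : x ∈ closure D.Ω) :
    DifferentiableAt ℝ (fun p : ℝ × E2 => z p.1 p.2) (t, x) := by
  obtain ⟨U, hU, hTU, hz1, -⟩ := hz
  exact (hz1.contDiffAt (hU.mem_nhds (hTU ⟨ht, hx⟩))).differentiableAt one_ne_zero

theorem contDiffAt (hz : ClassicalReg T D z) (ht : t ∈ Ico 0 T) (hx : x ∈ closure D.Ω) :
    ContDiffAt ℝ 2 (z t) x := by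
  obtain ⟨U, hU, hTU, -, hz2⟩ := hz
  exact (hz2 t).contDiffAt ((hU.preimage (Continuous.prodMk_right t)).mem_nhds (hTU ⟨ht, hx⟩))

theorem continuousOn (hz : ClassicalReg T D z) (ht : t ∈ Ico 0 T) :
    ContinuousOn (z t) (closure D.Ω) :=
  continuousOn_of_forall_continuousAt fun _ hx => (hz.contDiffAt ht hx).continuousAt

end ClassicalReg

namespace ProfileReg

variable {S : ℝ → ℝ → E2 → ℝ}

theorem differentiableAt (hS : ProfileReg T D S) (ht : t ∈ Ico 0 T) (θ : ℝ)
    (hx : x ∈ closure D.Ω) :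
    DifferentiableAt ℝ (fun p : ℝ × ℝ × E2 => S p.1 p.2.1 p.2.2) (t, θ, x) := by
  obtain ⟨U, hU, hTU, hS1, -⟩ := hS
  exact (hS1.contDiffAt (hU.mem_nhds (hTU ⟨ht, mem_univ θ, hx⟩))).differentiableAt one_ne_zero

theorem contDiffAt (hS : ProfileReg T D S) (ht : t ∈ Ico 0 T) (θ : ℝ) (hx : x ∈ closure D.Ω) :
    ContDiffAt ℝ 2 (S t θ) x := by
  obtain ⟨U, hU, hTU, -, hS2⟩ := hS
  exact (hS2 t θ).contDiffAt ((hU.preimage (by fun_prop)).mem_nhds (hTU ⟨ht, mem_univ θ, hx⟩))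

theorem continuousOn (hS : ProfileReg T D S) (ht : t ∈ Ico 0 T) (θ : ℝ) :
    ContinuousOn (S t θ) (closure D.Ω) :=
  continuousOn_of_forall_continuousAt fun _ hx => (hS.contDiffAt ht θ hx).continuousAt

theorem continuousOn_deriv (hS : ProfileReg T D S) (ht : t ∈ Ico 0 T) (θ : ℝ) :
    ContinuousOn (fun x => deriv (fun s => S s θ x) t) (closure D.Ω) := by
  obtain ⟨U, hU, hTU, hS1, -⟩ := hS
  have hmem : ∀ x ∈ closure D.Ω, (t, θ, x) ∈ U := fun x hx => hTU ⟨ht, mem_univ θ, hx⟩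
  have hderiv : ContinuousOn (fun x => fderiv ℝ (fun p : ℝ × ℝ × E2 => S p.1 p.2.1 p.2.2)
      (t, θ, x) (1, 0)) (closure D.Ω) :=
    ((hS1.continuousOn_fderiv_of_isOpen hU le_rfl).comp (by fun_prop) hmem).clm_apply
      continuousOn_const
  refine hderiv.congr fun x hx => ?_
  exact ((hS1.contDiffAt (hU.mem_nhds (hmem x hx))).differentiableAt
    one_ne_zero).hasDerivAt_comp_prodMk_left.deriv

end ProfileReg

theorem ClassicalReg.sub_twoScale {z : ℝ → E2 → ℝ} {S : ℝ → ℝ → E2 → ℝ}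
    (hz : ClassicalReg T D z) (hS : ProfileReg T D S) (ε : ℝ) :
    ClassicalReg T D (fun t x => z t x - S t (t / ε) x) := by
  obtain ⟨Uz, hUz, hTUz, hz1, hz2⟩ := hz
  obtain ⟨US, hUS, hTUS, hS1, hS2⟩ := hS
  set diag : ℝ × E2 → ℝ × ℝ × E2 := fun p => (p.1, p.1 / ε, p.2)
  have hdiag : ContDiff ℝ 1 diag := by fun_prop
  refine ⟨Uz ∩ diag ⁻¹' US, hUz.inter (hUS.preimage hdiag.continuous),
    fun p hp => ⟨hTUz hp, hTUS ⟨hp.1, mem_univ _, hp.2⟩⟩,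
    (hz1.mono inter_subset_left).sub
      (hS1.comp hdiag.contDiffOn fun p (hp : p ∈ Uz ∩ diag ⁻¹' US) => hp.2), fun t => ?_⟩
  exact ((hz2 t).mono fun x hx => hx.1).sub ((hS2 t (t / ε)).mono fun x hx => hx.2)

theorem ClassicalReg.hasDerivAt_integral_sq {w : ℝ → E2 → ℝ} (hw : ClassicalReg T D w)
    (ht : t ∈ Ico 0 T) :
    HasDerivAt (fun s => ∫ x in D.Ω, w s x ^ 2)
      (∫ x in D.Ω, 2 * w t x * deriv (fun s => w s x) t) t := by
  obtain ⟨U, hU, hTU, hw1, -⟩ := hw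
  set wt : ℝ × E2 → ℝ := fun p => fderiv ℝ (fun q : ℝ × E2 => w q.1 q.2) p (1, 0)
  have hpartial : ∀ p ∈ U, HasDerivAt (fun s => w s p.2) (wt p) p.1 := fun p hp =>
    ((hw1.contDiffAt (hU.mem_nhds hp)).differentiableAt one_ne_zero).hasDerivAt_comp_prodMk_left
  have hwt : ContinuousOn wt U :=
    (hw1.continuousOn_fderiv_of_isOpen hU le_rfl).clm_apply continuousOn_const
  have hleibniz := hasDerivAt_setIntegral_of_continuousOn (μ := volume)
    D.bounded.isCompact_closure subset_closure hU (f := fun s x => w s x ^ 2)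
    (f' := fun s x => 2 * w s x * wt (s, x)) (hw1.continuousOn.fun_pow 2)
    ((continuousOn_const.fun_mul hw1.continuousOn).fun_mul hwt)
    (fun p hp => by simpa [mul_comm] using (hpartial p hp).fun_pow 2)
    (fun p ⟨hp₁, hp₂⟩ => hTU ⟨(mem_singleton_iff.mp hp₁) ▸ ht, hp₂⟩)
  refine hleibniz.congr_deriv (setIntegral_congr_fun D.isOpen.measurableSet fun x hx => ?_)
  simp only [(hpartial (t, x) (hTU ⟨ht, subset_closure hx⟩)).deriv]

theorem ClassicalReg.deriv_sub_twoScale {z : ℝ → E2 → ℝ} {S : ℝ → ℝ → E2 → ℝ}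
    (hz : ClassicalReg T D z) (hS : ProfileReg T D S) (ht : t ∈ Ico 0 T) (hx : x ∈ closure D.Ω)
    {a : E2 → ℝ} {c : E2 → E2} {ε : ℝ} {j : ℕ} (hj : 1 ≤ j) (ha : ContDiffAt ℝ 1 a x)
    (hzpde : deriv (fun s => z s x) t - (1 / ε ^ j) * vdiv (fun y => a y • gradient (z t) y) x
      = (1 / ε ^ j) * vdiv c x)
    (hSpde : deriv (fun θ => S t θ x) (t / ε)
        - (1 / ε ^ (j - 1)) * vdiv (fun y => a y • gradient (S t (t / ε)) y) x
      = (1 / ε ^ (j - 1)) * vdiv c x) :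
    deriv (fun s => z s x - S s (s / ε) x) t
      = (1 / ε ^ j) * vdiv (fun y => a y • gradient (fun y => z t y - S t (t / ε) y) y) x
        - deriv (fun s => S s (t / ε) x) t := by
  have hpow : 1 / ε ^ j = ε⁻¹ * (1 / ε ^ (j - 1)) := by
    rw [← Nat.sub_add_cancel hj, pow_succ, one_div, one_div, mul_inv, mul_comm, Nat.add_sub_cancel]
  have hzd : HasDerivAt (fun s => z s x) (deriv (fun s => z s x) t) t :=
    (hz.differentiableAt ht hx).hasDerivAt_comp_prodMk_left.differentiableAt.hasDerivAt
  rw [(hzd.fun_sub (hasDerivAt_twoScale (hS.differentiableAt ht _ hx))).deriv,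
    vdiv_smul_gradient_fun_sub ha (hz.contDiffAt ht hx) (hS.contDiffAt ht _ hx)]
  linear_combination hzpde - ε⁻¹ * hSpde
    + (vdiv (fun y => a y • gradient (S t (t / ε)) y) x + vdiv c x) * hpow

theorem ClassicalReg.robin_sub_twoScale {z : ℝ → E2 → ℝ} {S : ℝ → ℝ → E2 → ℝ}
    (hz : ClassicalReg T D z) (hS : ProfileReg T D S) (ht : t ∈ Ico 0 T) (hx : x ∈ frontier D.Ω)
    {ε b : ℝ} (hzbc : ⟪gradient (z t) x, nml D x⟫ + z t x = b)
    (hSbc : ⟪gradient (S t (t / ε)) x, nml D x⟫ + S t (t / ε) x = b) :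
    ⟪gradient (fun y => z t y - S t (t / ε) y) x, nml D x⟫ + (z t x - S t (t / ε) x) = 0 := by
  have hx' := frontier_subset_closure hx
  rw [gradient_fun_sub ((hz.contDiffAt ht hx').differentiableAt (by simp))
    ((hS.contDiffAt ht _ hx').differentiableAt (by simp)), inner_sub_left]
  linarith

end Regularity

theorem ClassicalReg.sqrt_integral_sq_le_of_robin (D : C1Domain) (hdiv : DivergenceThm D)
    {T κ γ : ℝ} (hκ : 0 ≤ κ) (hγ : 0 ≤ γ) {w a f : ℝ → E2 → ℝ} (hw : ClassicalReg T D w)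
    (ha : ∀ t ∈ Ioo 0 T, ∀ x ∈ closure D.Ω, ContDiffAt ℝ 1 (a t) x ∧ 0 ≤ a t x)
    (hf : ∀ t ∈ Ioo 0 T, ContinuousOn (f t) (closure D.Ω) ∧ √(∫ x in D.Ω, f t x ^ 2) ≤ γ)
    (hpde : ∀ t ∈ Ioo 0 T, ∀ x ∈ D.Ω,
      deriv (fun s => w s x) t = κ * vdiv (fun y => a t y • gradient (w t) y) x - f t x)
    (hbc : ∀ t ∈ Ioo 0 T, ∀ x ∈ frontier D.Ω, ⟪gradient (w t) x, nml D x⟫ + w t x = 0)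
    {t : ℝ} (ht : t ∈ Ico 0 T) :
    √(∫ x in D.Ω, w t x ^ 2) ≤ √(∫ x in D.Ω, w 0 x ^ 2) + γ * t := by
  have hIcc : ∀ s ∈ Icc 0 t, s ∈ Ico 0 T := fun s hs => ⟨hs.1, hs.2.trans_lt ht.2⟩
  refine sqrt_le_sqrt_add_mul_of_deriv_le ht.1 hγ (fun s _ => integral_nonneg fun x => sq_nonneg _)
    (fun s hs => (hw.hasDerivAt_integral_sq (hIcc s hs)).continuousAt.continuousWithinAt)
    (fun s hs => hw.hasDerivAt_integral_sq (hIcc s (Ioo_subset_Icc_self hs))) fun s hs => ?_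
  have hs : s ∈ Ioo 0 T := ⟨hs.1, hs.2.trans ht.2⟩
  calc ∫ x in D.Ω, 2 * w s x * deriv (fun r => w r x) s
      = 2 * ∫ x in D.Ω, w s x * (κ * vdiv (fun y => a s y • gradient (w s) y) x - f s x) := by
        rw [← integral_const_mul]
        refine setIntegral_congr_fun D.isOpen.measurableSet fun x hx => ?_
        simp only [hpde s hs x hx, mul_assoc]
    _ ≤ 2 * (γ * √(∫ x in D.Ω, w s x ^ 2)) := by
        gcongr
        exact setIntegral_mul_robin_le D hdiv hκ
          (fun x hx => hw.contDiffAt (Ioo_subset_Ico_self hs) hx) (ha s hs) (hf s hs).1 (hf s hs).2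
          (hbc s hs)
    _ = 2 * γ * √(∫ x in D.Ω, w s x ^ 2) := by ring

theorem stmt1_general
    (D : C1Domain) (hdiv : DivergenceThm D)
    (j : ℕ) (hj : j = 1 ∨ j = 2)
    (ε T γ₉ K : ℝ) (hε : 0 < ε) (hγ₉ : 0 ≤ γ₉)
    -- coefficients A(t,θ,x), C(t,θ,x): C¹ near [0,T)×ℝ×closure Ω, 1-periodic in θ,
    -- A ≥ 0 on [0,T)×ℝ×closure Ω
    (A : ℝ → ℝ → E2 → ℝ) (C : ℝ → ℝ → E2 → E2)
    (UA : Set (ℝ × ℝ × E2)) (hUAopen : IsOpen UA)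
    (hUAsub : Ico 0 T ×ˢ (univ : Set ℝ) ×ˢ closure D.Ω ⊆ UA)
    (hA : ContDiffOn ℝ 1 (fun p : ℝ × ℝ × E2 => A p.1 p.2.1 p.2.2) UA)
    (hApos : ∀ t ∈ Ico 0 T, ∀ θ : ℝ, ∀ x ∈ closure D.Ω, 0 ≤ A t θ x)
    (g : E2 → ℝ)
    (z₀ : E2 → ℝ)
    -- the profile S
    (𝒮 : ℝ → ℝ → E2 → ℝ)
    (hSreg : ∃ U : Set (ℝ × ℝ × E2), IsOpen U ∧
      (Ico 0 T ×ˢ (univ : Set ℝ) ×ˢ closure D.Ω) ⊆ U ∧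
      ContDiffOn ℝ 1 (fun p : ℝ × ℝ × E2 => 𝒮 p.1 p.2.1 p.2.2) U ∧
      ∀ t θ : ℝ, ContDiffOn ℝ 2 (fun x => 𝒮 t θ x) {x | (t, θ, x) ∈ U})
    (hSpde : ∀ t ∈ Ico 0 T, ∀ θ : ℝ, ∀ x ∈ D.Ω,
      deriv (fun s => 𝒮 t s x) θ
          - (1 / ε ^ (j - 1)) * vdiv (fun y => A t θ y • gradient (𝒮 t θ) y) x
        = (1 / ε ^ (j - 1)) * vdiv (C t θ) x)
    (hSbc : ∀ t ∈ Ico 0 T, ∀ θ : ℝ, ∀ x ∈ frontier D.Ω,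
      ⟪gradient (𝒮 t θ) x, nml D x⟫ + 𝒮 t θ x = g x)
    (hSdt : ∀ t ∈ Ico 0 T, ∀ θ : ℝ,
      Real.sqrt (∫ x in D.Ω, (deriv (fun s => 𝒮 s θ x) t) ^ 2) ≤ γ₉)
    (hSL2 : ∀ t ∈ Ico 0 T, ∀ θ : ℝ,
      Real.sqrt (∫ x in D.Ω, (𝒮 t θ x) ^ 2) ≤ K)
    -- z : classical solution of the oscillating problem
    (z : ℝ → E2 → ℝ) (hzreg : ClassicalReg T D z)
    (hzpde : ∀ t ∈ Ioo 0 T, ∀ x ∈ D.Ω,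
      deriv (fun s => z s x) t
          - (1 / ε ^ j) * vdiv (fun y => A t (t / ε) y • gradient (z t) y) x
        = (1 / ε ^ j) * vdiv (C t (t / ε)) x)
    (hzinit : ∀ x ∈ D.Ω, z 0 x = z₀ x)
    (hzbc : ∀ t ∈ Ioo 0 T, ∀ x ∈ frontier D.Ω,
      ⟪gradient (z t) x, nml D x⟫ + z t x = g x) :
    ∀ t ∈ Ico 0 T,
      Real.sqrt (∫ x in D.Ω, (z t x) ^ 2)
        ≤ Real.sqrt (∫ x in D.Ω, (z₀ x - 𝒮 0 0 x) ^ 2) + γ₉ * T + K := by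
  intro t ht
  have hS : ProfileReg T D 𝒮 := hSreg
  have hA' : ∀ s ∈ Ioo 0 T, ∀ x ∈ closure D.Ω,
      ContDiffAt ℝ 1 (A s (s / ε)) x ∧ 0 ≤ A s (s / ε) x := fun s hs x hx =>
    ⟨(hA.contDiffAt (hUAopen.mem_nhds (hUAsub ⟨Ioo_subset_Ico_self hs, mem_univ _, hx⟩))).comp
      (g := fun p : ℝ × ℝ × E2 => A p.1 p.2.1 p.2.2) (f := fun y => (s, s / ε, y)) x
      (by fun_prop), hApos s (Ioo_subset_Ico_self hs) _ x hx⟩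
  have hwreg := hzreg.sub_twoScale hS ε
  have hw := hwreg.sqrt_integral_sq_le_of_robin D hdiv (by positivity) hγ₉
    hA' (fun s hs => ⟨hS.continuousOn_deriv (Ioo_subset_Ico_self hs) _,
      hSdt s (Ioo_subset_Ico_self hs) _⟩)
    (fun s hs x hx => hzreg.deriv_sub_twoScale hS (Ioo_subset_Ico_self hs) (subset_closure hx)
      (by omega) (hA' s hs x (subset_closure hx)).1 (hzpde s hs x hx)
      (hSpde s (Ioo_subset_Ico_self hs) _ x hx))
    (fun s hs x hx => hzreg.robin_sub_twoScale hS (Ioo_subset_Ico_self hs) hx (hzbc s hs x hx)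
      (hSbc s (Ioo_subset_Ico_self hs) _ x hx)) ht
  have hw0 : ∫ x in D.Ω, (z 0 x - 𝒮 0 (0 / ε) x) ^ 2 = ∫ x in D.Ω, (z₀ x - 𝒮 0 0 x) ^ 2 :=
    setIntegral_congr_fun D.isOpen.measurableSet fun x hx => by simp [hzinit x hx]
  calc √(∫ x in D.Ω, z t x ^ 2)
      = √(∫ x in D.Ω, ((z t x - 𝒮 t (t / ε) x) + 𝒮 t (t / ε) x) ^ 2) := by simp
    _ ≤ √(∫ x in D.Ω, (z t x - 𝒮 t (t / ε) x) ^ 2) + √(∫ x in D.Ω, 𝒮 t (t / ε) x ^ 2) :=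
      (D.bounded.memLp_two_of_continuousOn_closure (hwreg.continuousOn ht))
        |>.sqrt_integral_add_sq_le
          (D.bounded.memLp_two_of_continuousOn_closure (hS.continuousOn ht _))
    _ ≤ √(∫ x in D.Ω, (z₀ x - 𝒮 0 0 x) ^ 2) + γ₉ * T + K := by
      rw [← hw0]
      linarith [hSL2 t ht (t / ε), mul_le_mul_of_nonneg_left ht.2.le hγ₉]

/-- comparison estimate of the solution of the Robin problem against a
time-periodic profile `S` (the key estimate in the proof of Theorem 1.1). -/
theorem stmt1
    (D : C1Domain) (hdiv : DivergenceThm D)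
    (j : ℕ) (hj : j = 1 ∨ j = 2)
    (ε T γ₉ K : ℝ) (hε : 0 < ε) (hT : 0 < T) (hγ₉ : 0 ≤ γ₉) (hK : 0 ≤ K)
    -- coefficients A(t,θ,x), C(t,θ,x): C¹ near [0,T)×ℝ×closure Ω, 1-periodic in θ,
    -- A ≥ 0 on [0,T)×ℝ×closure Ω
    (A : ℝ → ℝ → E2 → ℝ) (C : ℝ → ℝ → E2 → E2)
    (UA : Set (ℝ × ℝ × E2)) (hUAopen : IsOpen UA)
    (hUAsub : Ico 0 T ×ˢ (univ : Set ℝ) ×ˢ closure D.Ω ⊆ UA)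
    (hA : ContDiffOn ℝ 1 (fun p : ℝ × ℝ × E2 => A p.1 p.2.1 p.2.2) UA)
    (hC : ContDiffOn ℝ 1 (fun p : ℝ × ℝ × E2 => C p.1 p.2.1 p.2.2) UA)
    (hAper : ∀ t θ x, A t (θ + 1) x = A t θ x)
    (hCper : ∀ t θ x, C t (θ + 1) x = C t θ x)
    (hApos : ∀ t ∈ Ico 0 T, ∀ θ : ℝ, ∀ x ∈ closure D.Ω, 0 ≤ A t θ x)
    (g : E2 → ℝ) (hg : Continuous g)
    (z₀ : E2 → ℝ)
    -- the profile S
    (𝒮 : ℝ → ℝ → E2 → ℝ)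
    (hSreg : ∃ U : Set (ℝ × ℝ × E2), IsOpen U ∧
      (Ico 0 T ×ˢ (univ : Set ℝ) ×ˢ closure D.Ω) ⊆ U ∧
      ContDiffOn ℝ 1 (fun p : ℝ × ℝ × E2 => 𝒮 p.1 p.2.1 p.2.2) U ∧
      ∀ t θ : ℝ, ContDiffOn ℝ 2 (fun x => 𝒮 t θ x) {x | (t, θ, x) ∈ U})
    (hSper : ∀ t θ x, 𝒮 t (θ + 1) x = 𝒮 t θ x)
    (hSpde : ∀ t ∈ Ico 0 T, ∀ θ : ℝ, ∀ x ∈ D.Ω,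
      deriv (fun s => 𝒮 t s x) θ
          - (1 / ε ^ (j - 1)) * vdiv (fun y => A t θ y • gradient (𝒮 t θ) y) x
        = (1 / ε ^ (j - 1)) * vdiv (C t θ) x)
    (hSbc : ∀ t ∈ Ico 0 T, ∀ θ : ℝ, ∀ x ∈ frontier D.Ω,
      ⟪gradient (𝒮 t θ) x, nml D x⟫ + 𝒮 t θ x = g x)
    (hSdt : ∀ t ∈ Ico 0 T, ∀ θ : ℝ,
      Real.sqrt (∫ x in D.Ω, (deriv (fun s => 𝒮 s θ x) t) ^ 2) ≤ γ₉)
    (hSL2 : ∀ t ∈ Ico 0 T, ∀ θ : ℝ,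
      Real.sqrt (∫ x in D.Ω, (𝒮 t θ x) ^ 2) ≤ K)
    -- z : classical solution of the oscillating problem
    (z : ℝ → E2 → ℝ) (hzreg : ClassicalReg T D z)
    (hzpde : ∀ t ∈ Ioo 0 T, ∀ x ∈ D.Ω,
      deriv (fun s => z s x) t
          - (1 / ε ^ j) * vdiv (fun y => A t (t / ε) y • gradient (z t) y) x
        = (1 / ε ^ j) * vdiv (C t (t / ε)) x)
    (hzinit : ∀ x ∈ D.Ω, z 0 x = z₀ x)
    (hzbc : ∀ t ∈ Ioo 0 T, ∀ x ∈ frontier D.Ω,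
      ⟪gradient (z t) x, nml D x⟫ + z t x = g x) :
    ∀ t ∈ Ico 0 T,
      Real.sqrt (∫ x in D.Ω, (z t x) ^ 2)
        ≤ Real.sqrt (∫ x in D.Ω, (z₀ x - 𝒮 0 0 x) ^ 2) + γ₉ * T + K :=
  stmt1_general D hdiv j hj ε T γ₉ K hε hγ₉ A C UA hUAopen hUAsub hA hApos g z₀ 𝒮 hSreg hSpde hSbc
    hSdt hSL2 z hzreg hzpde hzinit hzbc
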